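/- arXiv:2011.01487 — 3 statements merged into one kernel-verified Lean document; each statement's English description precedes it below -/
import Mathlib

section
/- Let a, b, c, d, e > 0 be real numbers with d+e ≥ a+b+c−1, de+d+e ≥ ab+bc+ca, d+e ≥ ab+bc+ca−abc, and de ≥ abc. Define A_n = ((a)_{n−1}(b)_{n−1}(c)_{n−1})/(n·(d)_{n−1}(e)_{n−1}(n−1)!) for n ≥ 1 (so A_1 = 1). Then the sequence (n A_n)_{n≥1} is nonincreasing. -/
/-!
Up to the factor `n`, `A_n` is the `(n - 1)`-st term `(a)_m (b)_m (c)_m / ((d)_m (e)_m m!)` of the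
series of `₃F₂(a, b, c; d, e; 1)`. Consecutive terms have ratio
`(a + m)(b + m)(c + m) / ((m + 1)(d + m)(e + m))`, and the difference
`(m + 1)(d + m)(e + m) - (a + m)(b + m)(c + m)` is the quadratic
`(d + e + 1 - a - b - c) m² + (de + d + e - ab - bc - ca) m + (de - abc)`,
whose coefficients are nonnegative by hypothesis.
-/

open scoped Nat

noncomputable def hypergeom32Coeff (a b c d e : ℝ) (m : ℕ) : ℝ :=
  (ascPochhammer ℝ m).eval a * (ascPochhammer ℝ m).eval b * (ascPochhammer ℝ m).eval c /
    ((ascPochhammer ℝ m).eval d * (ascPochhammer ℝ m).eval e * m !)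

section

variable (a b c d e : ℝ)

theorem hypergeom32Coeff_succ (m : ℕ) :
    hypergeom32Coeff a b c d e (m + 1) = hypergeom32Coeff a b c d e m *
      ((a + m) * (b + m) * (c + m) / ((m + 1) * (d + m) * (e + m))) := by
  simp only [hypergeom32Coeff, ascPochhammer_succ_eval, Nat.factorial_succ, Nat.cast_mul,
    Nat.cast_succ]
  rw [div_mul_div_comm]
  congr 1 <;> ring

variable {a b c d e}

theorem hypergeom32Coeff_nonneg (ha : 0 < a) (hb : 0 < b) (hc : 0 < c) (hd : 0 < d) (he : 0 < e)
    (m : ℕ) :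
    0 ≤ hypergeom32Coeff a b c d e m := by
  have := ascPochhammer_pos m a ha
  have := ascPochhammer_pos m b hb
  have := ascPochhammer_pos m c hc
  have := ascPochhammer_pos m d hd
  have := ascPochhammer_pos m e he
  unfold hypergeom32Coeff
  positivity

theorem prod_add_le_succ_mul_prod_add {x : ℝ} (hx : 0 ≤ x) (h1 : d + e ≥ a + b + c - 1)
    (h2 : d * e + d + e ≥ a * b + b * c + c * a) (h4 : d * e ≥ a * b * c) :
    (a + x) * (b + x) * (c + x) ≤ (x + 1) * (d + x) * (e + x) := by
  have hquad : (x + 1) * (d + x) * (e + x) - (a + x) * (b + x) * (c + x) =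
      (d + e + 1 - (a + b + c)) * x ^ 2 + (d * e + d + e - (a * b + b * c + c * a)) * x +
        (d * e - a * b * c) := by ring
  have : 0 ≤ (d + e + 1 - (a + b + c)) * x ^ 2 := by
    apply mul_nonneg <;> [linarith; positivity]
  have : 0 ≤ (d * e + d + e - (a * b + b * c + c * a)) * x := mul_nonneg (by linarith) hx
  linarith

theorem hypergeom32Coeff_succ_le (ha : 0 < a) (hb : 0 < b) (hc : 0 < c) (hd : 0 < d) (he : 0 < e)
    (h1 : d + e ≥ a + b + c - 1) (h2 : d * e + d + e ≥ a * b + b * c + c * a)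
    (h4 : d * e ≥ a * b * c) (m : ℕ) :
    hypergeom32Coeff a b c d e (m + 1) ≤ hypergeom32Coeff a b c d e m := by
  rw [hypergeom32Coeff_succ]
  refine mul_le_of_le_one_right (hypergeom32Coeff_nonneg ha hb hc hd he m)
    (div_le_one_of_le₀ ?_ (by positivity))
  exact prod_add_le_succ_mul_prod_add (Nat.cast_nonneg m) h1 h2 h4

end

theorem alexander_nAn_nonincreasing_general (a b c d e : ℝ) (ha : 0 < a) (hb : 0 < b) (hc : 0 < c)
    (hd : 0 < d) (he : 0 < e)
    (h1 : d + e ≥ a + b + c - 1)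
    (h2 : d * e + d + e ≥ a * b + b * c + c * a)
    (h4 : d * e ≥ a * b * c)
    (A : ℕ → ℝ)
    (hA : ∀ n : ℕ, 1 ≤ n → A n =
      ((ascPochhammer ℝ (n - 1)).eval a * (ascPochhammer ℝ (n - 1)).eval b *
        (ascPochhammer ℝ (n - 1)).eval c) /
      ((n : ℝ) * ((ascPochhammer ℝ (n - 1)).eval d * (ascPochhammer ℝ (n - 1)).eval e *
        (Nat.factorial (n - 1) : ℝ)))) :
    ∀ n : ℕ, 1 ≤ n → ((n : ℝ) + 1) * A (n + 1) ≤ (n : ℝ) * A n := by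
  have hnA : ∀ n : ℕ, 1 ≤ n → (n : ℝ) * A n = hypergeom32Coeff a b c d e (n - 1) :=
    fun n hn => by
      rw [hA n hn, mul_div_assoc', mul_div_mul_left _ _ (by positivity), hypergeom32Coeff]
  intro n hn
  obtain ⟨m, rfl⟩ := Nat.exists_eq_add_of_le' hn
  have hnA_succ := hnA (m + 1 + 1) (by omega)
  rw [Nat.cast_succ (m + 1)] at hnA_succ
  rw [hnA_succ, hnA (m + 1) hn, Nat.add_sub_cancel, Nat.add_sub_cancel]
  exact hypergeom32Coeff_succ_le ha hb hc hd he h1 h2 h4 m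

theorem alexander_nAn_nonincreasing (a b c d e : ℝ) (ha : 0 < a) (hb : 0 < b) (hc : 0 < c)
    (hd : 0 < d) (he : 0 < e)
    (h1 : d + e ≥ a + b + c - 1)
    (h2 : d * e + d + e ≥ a * b + b * c + c * a)
    (h3 : d + e ≥ a * b + b * c + c * a - a * b * c)
    (h4 : d * e ≥ a * b * c)
    (A : ℕ → ℝ)
    (hA : ∀ n : ℕ, 1 ≤ n → A n =
      ((ascPochhammer ℝ (n - 1)).eval a * (ascPochhammer ℝ (n - 1)).eval b *
        (ascPochhammer ℝ (n - 1)).eval c) /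
      ((n : ℝ) * ((ascPochhammer ℝ (n - 1)).eval d * (ascPochhammer ℝ (n - 1)).eval e *
        (Nat.factorial (n - 1) : ℝ)))) :
    ∀ n : ℕ, 1 ≤ n → ((n : ℝ) + 1) * A (n + 1) ≤ (n : ℝ) * A n :=
  alexander_nAn_nonincreasing_general a b c d e ha hb hc hd he h1 h2 h4 A hA
end

section
/- Suppose f(z) = z + Σ_{n≥1} A_{2n+1} z^{2n+1} is an odd analytic function on the unit disk with real coefficients satisfying 1 ≥ 3A₃ ≥ 5A₅ ≥ ⋯ ≥ (2n+1)A_{2n+1} ≥ ⋯ ≥ 0. Then Re( (1−z²) f′(z) ) > 0 for all z in the unit disk, i.e., f is close-to-convex with respect to (1/2) log((1+z)/(1−z)). -/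
/-!
Put `B n = (2n+1) A_{2n+1}` (so `B 0 = 1`) and `w = z²`; then `f'(z) = ∑ B n wⁿ`. Abel summation
gives `(1 - w) ∑ B n wⁿ = 1 - ∑ (B n - B (n+1)) wⁿ⁺¹`, and since the differences `B n - B (n+1)`
are nonnegative with sum at most `B 0 = 1`, the last series has modulus at most `|w| < 1`.
-/

open Complex

section NormedField

variable {𝕜 : Type*} [NormedField 𝕜] [CompleteSpace 𝕜] {a : ℕ → 𝕜} {C : ℝ}

theorem summable_mul_pow_of_norm_le (ha : ∀ n, ‖a n‖ ≤ C) {w : 𝕜} (hw : ‖w‖ < 1) :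
    Summable fun n => a n * w ^ n := by
  refine .of_norm_bounded ((summable_geometric_of_lt_one (norm_nonneg w) hw).mul_left C)
    fun n => ?_
  rw [norm_mul, norm_pow]
  exact mul_le_mul_of_nonneg_right (ha n) (by positivity)

theorem summable_mul_pow_two_mul_add_one (ha : ∀ n, ‖a n‖ ≤ C) {z : 𝕜} (hz : ‖z‖ < 1) :
    Summable fun n => a n * z ^ (2 * n + 1) := by
  have hz2 : ‖z ^ 2‖ < 1 := by rw [norm_pow]; nlinarith [norm_nonneg z]
  exact ((summable_mul_pow_of_norm_le ha hz2).mul_right z).congr fun n => by ring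

end NormedField

theorem hasSum_deriv_tsum_mul_pow_two_mul_add_one {a : ℕ → ℂ} {C : ℝ} (ha : ∀ n, ‖a n‖ ≤ C)
    {z : ℂ} (hz : ‖z‖ < 1) :
    HasSum (fun n => (2 * n + 1) * a n * z ^ (2 * n))
      (deriv (fun w => ∑' n, a n * w ^ (2 * n + 1)) z) := by
  obtain ⟨r, hzr, hr1⟩ := exists_between hz
  have hr0 : 0 ≤ r := (norm_nonneg z).trans hzr.le
  have hbound : ∀ n, ∀ w ∈ Metric.ball (0 : ℂ) r, ‖a n * w ^ (2 * n + 1)‖ ≤ C * r ^ n := by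
    intro n w hw
    rw [mem_ball_zero_iff] at hw
    rw [norm_mul, norm_pow]
    have hC : 0 ≤ C := (norm_nonneg _).trans (ha n)
    calc ‖a n‖ * ‖w‖ ^ (2 * n + 1) ≤ C * r ^ (2 * n + 1) := by gcongr; exact ha n
      _ ≤ C * r ^ n :=
          mul_le_mul_of_nonneg_left (pow_le_pow_of_le_one hr0 hr1.le (by omega)) hC
  have h := hasSum_deriv_of_summable_norm (F := fun n w => a n * w ^ (2 * n + 1))
    ((summable_geometric_of_lt_one hr0 hr1).mul_left C)
    (fun n => ((differentiable_id.pow _).const_mul (a n)).differentiableOn) Metric.isOpen_ball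
    hbound (mem_ball_zero_iff.mpr hzr)
  refine h.congr_fun fun n => ?_
  rw [((hasDerivAt_pow _ z).const_mul (a n)).deriv, Nat.add_sub_cancel]
  push_cast
  ring

theorem le_re_one_sub_mul_tsum_mul_pow {b : ℕ → ℝ} (hb : Antitone b) (hb0 : ∀ n, 0 ≤ b n)
    {w : ℂ} (hw : ‖w‖ < 1) : b 0 * (1 - ‖w‖) ≤ ((1 - w) * ∑' n, (b n : ℂ) * w ^ n).re := by
  set d : ℕ → ℝ := fun n => b n - b (n + 1)
  have hd0 : ∀ n, 0 ≤ d n := fun n => sub_nonneg.mpr (hb n.le_succ)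
  have hd_partial : ∀ N, ∑ i ∈ Finset.range N, d i ≤ b 0 := fun N => by
    rw [Finset.sum_range_sub']; linarith [hb0 N]
  have hd : Summable d := summable_of_sum_range_le hd0 hd_partial
  have hbC : ∀ n, ‖(b n : ℂ)‖ ≤ b 0 := fun n => by
    rw [norm_real, Real.norm_of_nonneg (hb0 n)]; exact hb (Nat.zero_le n)
  set S := ∑' n, (b n : ℂ) * w ^ n
  have hS : HasSum (fun n => (b n : ℂ) * w ^ n) S := (summable_mul_pow_of_norm_le hbC hw).hasSum
  have habel : HasSum (fun n => (d n : ℂ) * w ^ (n + 1)) (b 0 - (1 - w) * S) := by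
    have h := (hS.mul_right w).sub ((hasSum_nat_add_iff' 1).mpr hS)
    rw [Finset.sum_range_one, pow_zero, mul_one] at h
    rw [show (b 0 : ℂ) - (1 - w) * S = S * w - (S - b 0) by ring]
    exact h.congr_fun fun n => by push_cast [d]; ring
  have hnorm : ‖(b 0 : ℂ) - (1 - w) * S‖ ≤ (∑' n, d n) * ‖w‖ := by
    refine habel.norm_le_of_bounded (hd.hasSum.mul_right ‖w‖) fun n => ?_
    rw [norm_mul, norm_real, Real.norm_of_nonneg (hd0 n), norm_pow]
    exact mul_le_mul_of_nonneg_left (pow_le_of_le_one (norm_nonneg w) hw.le n.succ_ne_zero) (hd0 n)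
  have hre := (re_le_norm ((b 0 : ℂ) - (1 - w) * S)).trans hnorm
  have htsum : (∑' n, d n) * ‖w‖ ≤ b 0 * ‖w‖ :=
    mul_le_mul_of_nonneg_right (hd.tsum_le_of_sum_range_le hd_partial) (norm_nonneg w)
  simp only [sub_re, ofReal_re] at hre
  linarith

/-- `A_{2n+1}` with `A_1 = 1`: the coefficient of `z ^ (2 * n + 1)` in `f`. -/
def oddSeriesCoeff (A : ℕ → ℝ) : ℕ → ℝ
  | 0 => 1
  | n + 1 => A (2 * (n + 1) + 1)

section OddSeriesCoeff

variable {A : ℕ → ℝ}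

theorem oddSeriesCoeff_nonneg (hpos : ∀ n, 1 ≤ n → 0 ≤ A (2 * n + 1)) :
    ∀ n, 0 ≤ oddSeriesCoeff A n
  | 0 => zero_le_one
  | n + 1 => hpos (n + 1) n.succ_pos

theorem antitone_mul_oddSeriesCoeff (h1 : 3 * A 3 ≤ 1)
    (hmono : ∀ n : ℕ, 1 ≤ n →
      (2 * ((n : ℝ) + 1) + 1) * A (2 * (n + 1) + 1) ≤ (2 * (n : ℝ) + 1) * A (2 * n + 1)) :
    Antitone fun n : ℕ => (2 * n + 1 : ℝ) * oddSeriesCoeff A n := by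
  refine antitone_nat_of_succ_le fun n => ?_
  rcases n with _ | n
  · norm_num [oddSeriesCoeff]; exact h1
  · simpa [oddSeriesCoeff] using hmono (n + 1) n.succ_pos

end OddSeriesCoeff

theorem ozaki_odd_close_to_convex (A : ℕ → ℝ)
    (hpos : ∀ n, 1 ≤ n → 0 ≤ A (2 * n + 1))
    (h1 : 3 * A 3 ≤ 1)
    (hmono : ∀ n : ℕ, 1 ≤ n →
      (2 * ((n : ℝ) + 1) + 1) * A (2 * (n + 1) + 1) ≤ (2 * (n : ℝ) + 1) * A (2 * n + 1))
    (f : ℂ → ℂ)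
    (hf : ∀ z ∈ Metric.ball (0 : ℂ) 1,
      f z = z + ∑' n : ℕ, (A (2 * (n + 1) + 1) : ℂ) * z ^ (2 * (n + 1) + 1)) :
    ∀ z ∈ Metric.ball (0 : ℂ) 1, 0 < ((1 - z ^ 2) * deriv f z).re := by
  set a := oddSeriesCoeff A
  set B : ℕ → ℝ := fun n => (2 * n + 1) * a n
  have hB : Antitone B := antitone_mul_oddSeriesCoeff h1 hmono
  have ha0 := oddSeriesCoeff_nonneg hpos
  have hB0 : ∀ n, 0 ≤ B n := fun n => mul_nonneg (by positivity) (ha0 n)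
  have hB_zero : B 0 = 1 := by simp [B, a, oddSeriesCoeff]
  have ha : ∀ n, ‖(a n : ℂ)‖ ≤ 1 := fun n => by
    rw [norm_real, Real.norm_of_nonneg (ha0 n), ← hB_zero]
    calc a n ≤ B n := le_mul_of_one_le_left (ha0 n) (le_add_of_nonneg_left (by positivity))
      _ ≤ B 0 := hB n.zero_le
  intro z hz
  have hz1 : ‖z‖ < 1 := mem_ball_zero_iff.mp hz
  have hf_eq : f =ᶠ[nhds z] fun w => ∑' n, (a n : ℂ) * w ^ (2 * n + 1) := by
    filter_upwards [Metric.isOpen_ball.mem_nhds hz] with w hw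
    rw [hf w hw, (summable_mul_pow_two_mul_add_one ha (mem_ball_zero_iff.mp hw)).tsum_eq_zero_add]
    simp [a, oddSeriesCoeff]
  have hderiv : deriv f z = ∑' n, (B n : ℂ) * (z ^ 2) ^ n := by
    rw [hf_eq.deriv_eq, ← (hasSum_deriv_tsum_mul_pow_two_mul_add_one ha hz1).tsum_eq]
    exact tsum_congr fun n => by push_cast [B]; ring
  have hz2 : ‖z ^ 2‖ < 1 := by rw [norm_pow]; nlinarith [norm_nonneg z]
  calc 0 < B 0 * (1 - ‖z ^ 2‖) := by rw [hB_zero]; linarith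
    _ ≤ _ := hderiv ▸ le_re_one_sub_mul_tsum_mul_pow hB hB0 hz2
end

section
/- Let a, b, c, d, e > 0 with de ≥ 3abc and d+e ≥ max{a+b+c, (2(ab+bc+ca)+3(a+b+c)−6abc−1)/3, 3(ab+bc+ca)−7abc}. Then the odd function f(z) = z·₃F₂(a,b,c;d,e;z²) satisfies Re((1−z²)f′(z)) > 0 on the unit disk; in particular f is univalent (close-to-convex with respect to (1/2)log((1+z)/(1−z))). -/
open Complex

/-!
Let `Aₙ` be the `n`-th coefficient of `₃F₂(a,b,c;d,e;·)` and `Bₙ = (2n+1) Aₙ`, so `B₀ = 1` and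
`(1 - z²) f'(z) = (1 - w) ∑ Bₙ wⁿ` with `w = z²`. Via the ratio `Aₙ₊₁ / Aₙ`, the inequality
`Bₙ₊₁ ≤ Bₙ` is a cubic inequality in `n`, and the hypotheses make its coefficients
nonnegative. For a positive decreasing sequence, summation by parts gives
`(1 - w) ∑ Bₙ wⁿ = B₀ - ∑ (Bₙ - Bₙ₊₁) wⁿ⁺¹`, whose real part is at least `B₀ (1 - |w|) > 0`.
-/

noncomputable def hyp3F2Coeff (a b c d e : ℝ) (n : ℕ) : ℝ :=
  ((ascPochhammer ℝ n).eval a * (ascPochhammer ℝ n).eval b * (ascPochhammer ℝ n).eval c) /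
    ((ascPochhammer ℝ n).eval d * (ascPochhammer ℝ n).eval e * (n.factorial : ℝ))

section Coefficients

variable {a b c d e : ℝ}

lemma hyp3F2Coeff_zero : hyp3F2Coeff a b c d e 0 = 1 := by
  simp [hyp3F2Coeff]

lemma hyp3F2Coeff_pos (ha : 0 < a) (hb : 0 < b) (hc : 0 < c) (hd : 0 < d) (he : 0 < e)
    (n : ℕ) : 0 < hyp3F2Coeff a b c d e n := by
  have := ascPochhammer_pos n a ha
  have := ascPochhammer_pos n b hb
  have := ascPochhammer_pos n c hc
  have := ascPochhammer_pos n d hd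
  have := ascPochhammer_pos n e he
  unfold hyp3F2Coeff
  positivity

lemma hyp3F2Coeff_succ_mul (hd : 0 < d) (he : 0 < e) (n : ℕ) :
    hyp3F2Coeff a b c d e (n + 1) * ((d + n) * (e + n) * (n + 1)) =
      hyp3F2Coeff a b c d e n * ((a + n) * (b + n) * (c + n)) := by
  have := ascPochhammer_pos n d hd
  have := ascPochhammer_pos n e he
  have : 0 < d + n := by positivity
  have : 0 < e + n := by positivity
  simp only [hyp3F2Coeff, ascPochhammer_succ_eval, Nat.factorial_succ]
  push_cast
  field_simp

lemma two_mul_add_three_mul_prod_le (hde : 3 * a * b * c ≤ d * e) (h1 : a + b + c ≤ d + e)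
    (h2 : 2 * (a * b + b * c + c * a) + 3 * (a + b + c) - 6 * a * b * c - 1 ≤ 3 * (d + e))
    (h3 : 3 * (a * b + b * c + c * a) - 7 * a * b * c ≤ d + e) {x : ℝ} (hx : 0 ≤ x) :
    (2 * x + 3) * ((a + x) * (b + x) * (c + x)) ≤ (2 * x + 1) * (x + 1) * ((d + x) * (e + x)) := by
  have hexpand : (2 * x + 1) * (x + 1) * ((d + x) * (e + x)) -
      (2 * x + 3) * ((a + x) * (b + x) * (c + x)) =
      2 * (d + e - (a + b + c)) * x ^ 3 +
      (2 * (d * e) + 3 * (d + e) + 1 - 2 * (a * b + b * c + c * a) - 3 * (a + b + c)) * x ^ 2 +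
      (3 * (d * e) + (d + e) - 2 * (a * b * c) - 3 * (a * b + b * c + c * a)) * x +
      (d * e - 3 * (a * b * c)) := by ring
  have hx3 : 0 ≤ 2 * (d + e - (a + b + c)) * x ^ 3 := by
    have : 0 ≤ d + e - (a + b + c) := by linarith
    positivity
  have hx2 : 0 ≤ (2 * (d * e) + 3 * (d + e) + 1 - 2 * (a * b + b * c + c * a) -
      3 * (a + b + c)) * x ^ 2 :=
    mul_nonneg (by linarith) (sq_nonneg x)
  have hx1 : 0 ≤ (3 * (d * e) + (d + e) - 2 * (a * b * c) - 3 * (a * b + b * c + c * a)) * x :=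
    mul_nonneg (by linarith) hx
  nlinarith

lemma antitone_odd_mul_hyp3F2Coeff (ha : 0 < a) (hb : 0 < b) (hc : 0 < c) (hd : 0 < d)
    (he : 0 < e) (hde : 3 * a * b * c ≤ d * e) (h1 : a + b + c ≤ d + e)
    (h2 : 2 * (a * b + b * c + c * a) + 3 * (a + b + c) - 6 * a * b * c - 1 ≤ 3 * (d + e))
    (h3 : 3 * (a * b + b * c + c * a) - 7 * a * b * c ≤ d + e) :
    Antitone fun n : ℕ => (2 * n + 1 : ℝ) * hyp3F2Coeff a b c d e n := by
  refine antitone_nat_of_succ_le fun n => ?_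
  have hA := hyp3F2Coeff_pos ha hb hc hd he n
  have hrec := hyp3F2Coeff_succ_mul (a := a) (b := b) (c := c) hd he n
  have hpoly := two_mul_add_three_mul_prod_le hde h1 h2 h3 n.cast_nonneg
  have hden : 0 < (d + n) * (e + n) * (n + 1) := by positivity
  rw [← mul_le_mul_iff_of_pos_right hden]
  push_cast
  calc (2 * (n + 1 : ℝ) + 1) * hyp3F2Coeff a b c d e (n + 1) * ((d + n) * (e + n) * (n + 1))
      = hyp3F2Coeff a b c d e n * ((2 * n + 3) * ((a + n) * (b + n) * (c + n))) := by
        rw [mul_assoc, hrec]; ring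
    _ ≤ hyp3F2Coeff a b c d e n * ((2 * n + 1) * (n + 1) * ((d + n) * (e + n))) := by
        gcongr
    _ = (2 * n + 1) * hyp3F2Coeff a b c d e n * ((d + n) * (e + n) * (n + 1)) := by ring

end Coefficients

theorem re_one_sub_mul_tsum_pos {B : ℕ → ℝ} (hB : Antitone B) (hB_nonneg : ∀ n, 0 ≤ B n)
    (hB0 : 0 < B 0) {w : ℂ} (hw : ‖w‖ < 1) :
    0 < ((1 - w) * ∑' n, (B n : ℂ) * w ^ n).re := by
  have hS : Summable fun n => (B n : ℂ) * w ^ n := by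
    refine .of_norm_bounded ((summable_geometric_of_lt_one (norm_nonneg w) hw).mul_left (B 0))
      fun n => ?_
    rw [norm_mul, norm_pow, norm_real, Real.norm_of_nonneg (hB_nonneg n)]
    exact mul_le_mul_of_nonneg_right (hB n.zero_le) (by positivity)
  set D : ℕ → ℝ := fun n => B n - B (n + 1) with hD_def
  have hD_nonneg : ∀ n, 0 ≤ D n := fun n => sub_nonneg.2 (hB n.le_succ)
  have hD_partial : ∀ n, ∑ i ∈ Finset.range n, D i ≤ B 0 := fun n => by
    rw [Finset.sum_range_sub']
    linarith [hB_nonneg n]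
  have hD : Summable D := summable_of_sum_range_le hD_nonneg hD_partial
  have hD_le : ∑' n, D n ≤ B 0 := Real.tsum_le_of_sum_range_le hD_nonneg hD_partial
  have hshift : Summable fun n => (B (n + 1) : ℂ) * w ^ (n + 1) :=
    (summable_nat_add_iff 1).mpr hS
  have habel : (1 - w) * ∑' n, (B n : ℂ) * w ^ n = B 0 - ∑' n, (D n : ℂ) * w ^ (n + 1) := by
    rw [sub_mul, one_mul, ← tsum_mul_left, hS.tsum_eq_zero_add, add_sub_assoc,
      ← hshift.tsum_sub (hS.mul_left w)]
    simp only [hD_def, pow_zero, mul_one, pow_succ, ofReal_sub]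
    rw [sub_eq_add_neg, ← tsum_neg]
    congr 1
    exact tsum_congr fun n => by ring
  have hnorm : ‖∑' n, (D n : ℂ) * w ^ (n + 1)‖ ≤ B 0 * ‖w‖ := by
    refine (tsum_of_norm_bounded (hD.hasSum.mul_right ‖w‖) fun n => ?_).trans
      (mul_le_mul_of_nonneg_right hD_le (norm_nonneg w))
    rw [norm_mul, norm_real, Real.norm_of_nonneg (hD_nonneg n)]
    exact mul_le_mul_of_nonneg_left
      (by simpa using pow_le_of_le_one (norm_nonneg w) hw.le n.succ_ne_zero) (hD_nonneg n)
  rw [habel, sub_re, ofReal_re]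
  nlinarith [(re_le_norm _).trans hnorm]

theorem hasDerivAt_mul_tsum_sq_pow {a : ℕ → ℂ} {M : ℝ}
    (ha : ∀ n : ℕ, ‖(2 * n + 1 : ℂ) * a n‖ ≤ M) {z : ℂ} (hz : ‖z‖ < 1) :
    HasDerivAt (fun w => w * ∑' n, a n * (w ^ 2) ^ n)
      (∑' n : ℕ, (2 * n + 1 : ℂ) * a n * (z ^ 2) ^ n) z := by
  obtain ⟨r, hzr, hr1⟩ := exists_between hz
  have hr0 : 0 < r := (norm_nonneg z).trans_lt hzr
  have hM : 0 ≤ M := (norm_nonneg _).trans (ha 0)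
  have hu : Summable fun n : ℕ => M * (r ^ 2) ^ n :=
    (summable_geometric_of_lt_one (by positivity) (by nlinarith)).mul_left M
  have hterm : ∀ (n : ℕ) (y : ℂ), HasDerivAt (fun w => a n * w ^ (2 * n + 1))
      ((2 * n + 1 : ℂ) * a n * (y ^ 2) ^ n) y := fun n y => by
    refine ((hasDerivAt_pow (2 * n + 1) y).const_mul (a n)).congr_deriv ?_
    rw [Nat.add_sub_cancel, ← pow_mul]
    push_cast
    ring
  have hbound : ∀ n : ℕ, ∀ y ∈ Metric.ball (0 : ℂ) r,
      ‖(2 * n + 1 : ℂ) * a n * (y ^ 2) ^ n‖ ≤ M * (r ^ 2) ^ n := fun n y hy => by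
    rw [norm_mul, norm_pow, norm_pow]
    exact mul_le_mul (ha n) (by gcongr; exact (mem_ball_zero_iff.1 hy).le) (by positivity) hM
  have hodd : (fun w => w * ∑' n, a n * (w ^ 2) ^ n) = fun w => ∑' n, a n * w ^ (2 * n + 1) := by
    funext w
    rw [← tsum_mul_left]
    exact tsum_congr fun n => by ring
  rw [hodd]
  exact hasDerivAt_tsum_of_isPreconnected hu Metric.isOpen_ball
    (convex_ball (0 : ℂ) r).isPreconnected (fun n y _ => hterm n y) hbound
    (Metric.mem_ball_self hr0) (by simp) (mem_ball_zero_iff.2 hzr)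

theorem hyp3F2_odd_close_to_convex (a b c d e : ℝ) (ha : 0 < a) (hb : 0 < b) (hc : 0 < c)
    (hd : 0 < d) (he : 0 < e) (hde : d * e ≥ 3 * a * b * c)
    (hsum : d + e ≥ max (max (a + b + c)
      ((2 * (a * b + b * c + c * a) + 3 * (a + b + c) - 6 * a * b * c - 1) / 3))
      (3 * (a * b + b * c + c * a) - 7 * a * b * c))
    (f : ℂ → ℂ)
    (hf : ∀ z ∈ Metric.ball (0 : ℂ) 1,
      f z = z * ∑' n : ℕ,
        ((((ascPochhammer ℝ n).eval a * (ascPochhammer ℝ n).eval b *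
          (ascPochhammer ℝ n).eval c) /
          ((ascPochhammer ℝ n).eval d * (ascPochhammer ℝ n).eval e *
          (Nat.factorial n : ℝ))) : ℂ) * (z ^ 2) ^ n) :
    ∀ z ∈ Metric.ball (0 : ℂ) 1, 0 < ((1 - z ^ 2) * deriv f z).re := by
  have h1 : a + b + c ≤ d + e := (le_max_left _ _).trans ((le_max_left _ _).trans hsum)
  have h2 : 2 * (a * b + b * c + c * a) + 3 * (a + b + c) - 6 * a * b * c - 1 ≤ 3 * (d + e) := by
    linarith [(le_max_right _ _).trans ((le_max_left _ _).trans hsum)]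
  have h3 : 3 * (a * b + b * c + c * a) - 7 * a * b * c ≤ d + e := (le_max_right _ _).trans hsum
  set B : ℕ → ℝ := fun n => (2 * n + 1) * hyp3F2Coeff a b c d e n with hB_def
  have hB : Antitone B := antitone_odd_mul_hyp3F2Coeff ha hb hc hd he hde h1 h2 h3
  have hB_nonneg : ∀ n, 0 ≤ B n := fun n => by
    have := hyp3F2Coeff_pos ha hb hc hd he n
    positivity
  have hB0 : B 0 = 1 := by simp [hB_def, hyp3F2Coeff_zero]
  intro z hz
  have hcoeff_norm : ∀ n : ℕ, ‖(2 * n + 1 : ℂ) * (hyp3F2Coeff a b c d e n : ℂ)‖ ≤ 1 := fun n => by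
    have : (2 * n + 1 : ℂ) * (hyp3F2Coeff a b c d e n : ℂ) = (B n : ℂ) := by simp [hB_def]
    rw [this, norm_real, Real.norm_of_nonneg (hB_nonneg n), ← hB0]
    exact hB n.zero_le
  have hF := hasDerivAt_mul_tsum_sq_pow hcoeff_norm (mem_ball_zero_iff.1 hz)
  have hf_near : f =ᶠ[nhds z] fun w => w * ∑' n, (hyp3F2Coeff a b c d e n : ℂ) * (w ^ 2) ^ n :=
    Filter.eventuallyEq_of_mem (Metric.isOpen_ball.mem_nhds hz) fun w hw => by
      simp only [hf w hw, hyp3F2Coeff]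
      push_cast
      rfl
  have hw : ‖z ^ 2‖ < 1 := by
    rw [norm_pow]
    exact pow_lt_one₀ (norm_nonneg z) (mem_ball_zero_iff.1 hz) two_ne_zero
  rw [(hF.congr_of_eventuallyEq hf_near).deriv]
  convert re_one_sub_mul_tsum_pos hB hB_nonneg (hB0 ▸ one_pos) hw using 5 with n
  simp [hB_def]
end
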